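/- arXiv:2601.15143 — 2 statements merged into one kernel-verified Lean document; each statement's English description precedes it below -/
import Mathlib

section
/- Let n ≥ 1 and 0 < s < 1. For every x ∈ ℝ^n and every u ∈ C_c^∞(ℝ^n), the function h ↦ (2u(x) − u(x+h) − u(x−h)) / |h|^{n+2s} is integrable on ℝ^n. -/
open Real Set MeasureTheory Module
open scoped ENNReal NNReal

section
variable {E : Type*} [NormedAddCommGroup E] [NormedSpace ℝ E]
  [MeasurableSpace E] [BorelSpace E] [FiniteDimensional ℝ E] [Nontrivial E]
  (μ : Measure E) [μ.IsAddHaarMeasure]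

lemma integrable_comp_norm' {f : ℝ → ℝ} (hf : Measurable f)
    (hint : ∫⁻ y in Ioi (0:ℝ), ENNReal.ofReal (y ^ (finrank ℝ E - 1)) * ‖f y‖₊ < ⊤) :
    Integrable (fun x : E => f ‖x‖) μ := by
  refine ⟨(hf.comp measurable_norm).aestronglyMeasurable, ?_⟩
  show ∫⁻ x, ‖f ‖x‖‖₊ ∂μ < ⊤
  set g : ℝ → ℝ≥0∞ := fun y => (‖f y‖₊ : ℝ≥0∞) with hgdef
  have hg : Measurable g := hf.nnnorm.coe_nnreal_ennreal
  have hmeas : Measurable fun p : Metric.sphere (0:E) 1 × Ioi (0:ℝ) => g p.2 :=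
    hg.comp (measurable_subtype_coe.comp measurable_snd)
  have h1 : ∫⁻ x : ({0}ᶜ : Set E), g ‖x.1‖ ∂(μ.comap Subtype.val)
      = ∫⁻ x in ({0}ᶜ : Set E), g ‖x‖ ∂μ :=
    lintegral_subtype_comap (measurableSet_singleton (0:E)).compl (fun a => g ‖a‖)
  have h4 : ∫⁻ y : Ioi (0:ℝ), g ↑y ∂(Measure.volumeIoiPow (finrank ℝ E - 1))
      = ∫⁻ y in Ioi (0:ℝ), ENNReal.ofReal (y ^ (finrank ℝ E - 1)) * g y :=
    (lintegral_withDensity_eq_lintegral_mul (Measure.comap Subtype.val volume)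
        ((measurable_subtype_coe.pow_const (finrank ℝ E - 1)).ennreal_ofReal)
        (hg.comp measurable_subtype_coe)).trans
      (lintegral_subtype_comap measurableSet_Ioi
        (fun y : ℝ => ENNReal.ofReal (y ^ (finrank ℝ E - 1)) * g y))
  calc ∫⁻ x, g ‖x‖ ∂μ
      = ∫⁻ x : ({0}ᶜ : Set E), g ‖x.1‖ ∂(μ.comap Subtype.val) := by
        rw [h1, MeasureTheory.restrict_compl_singleton]
    _ = ∫⁻ p : Metric.sphere (0:E) 1 × Ioi (0:ℝ), g p.2
          ∂(μ.toSphere.prod (.volumeIoiPow (finrank ℝ E - 1))) := by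
        rw [← (μ.measurePreserving_homeomorphUnitSphereProd).lintegral_comp hmeas]
        congr 1
        funext a; simp
    _ = μ.toSphere univ * ∫⁻ y : Ioi (0:ℝ), g y ∂(Measure.volumeIoiPow (finrank ℝ E - 1)) := by
        rw [lintegral_prod _ hmeas.aemeasurable]
        simp [lintegral_const, mul_comm]
    _ = μ.toSphere univ * ∫⁻ y in Ioi (0:ℝ), ENNReal.ofReal (y ^ (finrank ℝ E - 1)) * g y := by
        rw [h4]
    _ < ⊤ := ENNReal.mul_lt_top (measure_lt_top _ _) hint
end

theorem stmt_3 (n : ℕ) (hn : 1 ≤ n) (s : ℝ) (hs : 0 < s) (hs1 : s < 1)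
    (u : EuclideanSpace ℝ (Fin n) → ℝ) (hu : ContDiff ℝ (⊤ : ℕ∞) u) (hcs : HasCompactSupport u)
    (x : EuclideanSpace ℝ (Fin n)) :
    Integrable (fun h : EuclideanSpace ℝ (Fin n) =>
      (2 * u x - u (x + h) - u (x - h)) / ‖h‖ ^ ((n : ℝ) + 2 * s)) := by
  haveI : Nontrivial (EuclideanSpace ℝ (Fin n)) :=
    nontrivial_of_finrank_pos (R := ℝ) (by rw [finrank_euclideanSpace_fin]; omega)
  set r : ℝ := (n : ℝ) + 2 * s with hrdef
  have hr : 0 < r := by positivity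
  -- sup bound on u
  obtain ⟨M, hM⟩ := hcs.exists_bound_of_continuous hu.continuous
  have hM0 : 0 ≤ M := (norm_nonneg _).trans (hM 0)
  -- second derivative bound
  have hφ : ContDiff ℝ (⊤ : ℕ∞) (fderiv ℝ u) := hu.fderiv_right (by simp)
  have hψcs : HasCompactSupport (fderiv ℝ (fderiv ℝ u)) := (hcs.fderiv ℝ).fderiv ℝ
  obtain ⟨L, hL⟩ : ∃ C, ∀ x, ‖fderiv ℝ (fderiv ℝ u) x‖ ≤ C := by
    obtain ⟨C, hC⟩ := hψcs.isCompact.exists_bound_of_continuousOn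
      ((hφ.fderiv_right (m := (⊤ : ℕ∞)) (by simp)).continuous).continuousOn
    refine ⟨max C 0, fun x => ?_⟩
    by_cases hx : x ∈ tsupport (fderiv ℝ (fderiv ℝ u))
    · exact (hC x hx).trans (le_max_left _ _)
    · rw [image_eq_zero_of_notMem_tsupport hx, ContinuousLinearMap.opNorm_zero]
      exact le_max_right _ _
  have hL0 : 0 ≤ L := (ContinuousLinearMap.opNorm_nonneg _).trans (hL 0)
  have hlip : ∀ a b : EuclideanSpace ℝ (Fin n),
      ‖fderiv ℝ u a - fderiv ℝ u b‖ ≤ L * ‖a - b‖ := fun a b =>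
    convex_univ.norm_image_sub_le_of_norm_fderiv_le
      (fun z _ => (hφ.differentiable (by simp)).differentiableAt)
      (fun z _ => hL z) (mem_univ b) (mem_univ a)
  have hud : ∀ z : EuclideanSpace ℝ (Fin n), DifferentiableAt ℝ u z := fun z =>
    (hu.differentiable (by simp)).differentiableAt
  -- second order bound
  have key2 : ∀ h : EuclideanSpace ℝ (Fin n),
      |2 * u x - u (x + h) - u (x - h)| ≤ 2 * L * ‖h‖ ^ 2 := by
    intro h
    have hmem : ∀ y : EuclideanSpace ℝ (Fin n), ‖y - x‖ ≤ ‖h‖ →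
        y ∈ Metric.closedBall x ‖h‖ := fun y hy => mem_closedBall_iff_norm.mpr hy
    have hbound : ∀ z ∈ Metric.closedBall x ‖h‖, ‖fderiv ℝ u z - fderiv ℝ u x‖ ≤ L * ‖h‖ :=
      fun z hz => (hlip z x).trans
        (mul_le_mul_of_nonneg_left (mem_closedBall_iff_norm.mp hz) hL0)
    have hA := (convex_closedBall x ‖h‖).norm_image_sub_le_of_norm_fderiv_le'
      (fun z _ => hud z) hbound (Metric.mem_closedBall_self (norm_nonneg _))
      (hmem (x + h) (by simp))
    have hB := (convex_closedBall x ‖h‖).norm_image_sub_le_of_norm_fderiv_le'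
      (fun z _ => hud z) hbound (Metric.mem_closedBall_self (norm_nonneg _))
      (hmem (x - h) (by simp))
    have e1 : x + h - x = h := by abel
    have e2 : x - h - x = -h := by abel
    rw [e1] at hA
    rw [e2, norm_neg, map_neg] at hB
    have heq : 2 * u x - u (x + h) - u (x - h) =
        -((u (x + h) - u x - (fderiv ℝ u x) h) + (u (x - h) - u x - -(fderiv ℝ u x) h)) := by
      ring
    rw [heq, abs_neg]
    calc |(u (x + h) - u x - (fderiv ℝ u x) h) + (u (x - h) - u x - -(fderiv ℝ u x) h)|
        ≤ |u (x + h) - u x - (fderiv ℝ u x) h| + |u (x - h) - u x - -(fderiv ℝ u x) h| :=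
          abs_add_le _ _
      _ ≤ L * ‖h‖ * ‖h‖ + L * ‖h‖ * ‖h‖ := add_le_add hA hB
      _ = 2 * L * ‖h‖ ^ 2 := by ring
  have keyM : ∀ h : EuclideanSpace ℝ (Fin n),
      |2 * u x - u (x + h) - u (x - h)| ≤ 4 * M := by
    intro h
    have h1 := abs_le.mp ((Real.norm_eq_abs _ ▸ hM x : |u x| ≤ M))
    have h2 := abs_le.mp ((Real.norm_eq_abs _ ▸ hM (x + h) : |u (x + h)| ≤ M))
    have h3 := abs_le.mp ((Real.norm_eq_abs _ ▸ hM (x - h) : |u (x - h)| ≤ M))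
    rw [abs_le]; constructor <;> linarith
  -- dominating radial profile
  set F : ℝ → ℝ := fun y => min (2 * L * y ^ 2) (4 * M) / y ^ r with hFdef
  have hFmeas : Measurable F :=
    ((measurable_const.mul (measurable_id.pow_const 2)).min measurable_const).div
      (Real.continuous_rpow_const hr.le).measurable
  have hFnonneg : ∀ y : ℝ, 0 ≤ y → 0 ≤ F y := fun y hy =>
    div_nonneg (le_min (by positivity) (by positivity)) (rpow_nonneg hy r)
  -- radial integrability
  have hW : IntegrableOn (fun y : ℝ => y ^ (n - 1) * F y) (Ioi (0:ℝ)) := by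
    have hWmeas : AEStronglyMeasurable (fun y : ℝ => y ^ (n - 1) * F y) volume :=
      ((measurable_id.pow_const (n - 1)).mul hFmeas).aestronglyMeasurable
    rw [← Ioc_union_Ioi_eq_Ioi (zero_le_one : (0:ℝ) ≤ 1)]
    apply IntegrableOn.union
    · -- near zero: dominated by 2L * y ^ (1 - 2s)
      have hint : IntegrableOn (fun y : ℝ => 2 * L * y ^ (1 - 2 * s)) (Ioc (0:ℝ) 1) := by
        have := intervalIntegral.intervalIntegrable_rpow' (a := 0) (b := 1)
          (r := 1 - 2 * s) (by linarith)
        exact ((intervalIntegrable_iff_integrableOn_Ioc_of_le zero_le_one).mp this).const_mul _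
      apply hint.mono' hWmeas.restrict
      filter_upwards [ae_restrict_mem measurableSet_Ioc] with y hy
      have hy0 : 0 < y := hy.1
      rw [Real.norm_eq_abs,
        abs_of_nonneg (mul_nonneg (pow_nonneg hy0.le _) (hFnonneg y hy0.le))]
      have h1 : F y ≤ 2 * L * y ^ 2 / y ^ r := by
        apply div_le_div_of_nonneg_right (min_le_left _ _) (rpow_pos_of_pos hy0 r).le
      calc y ^ (n - 1) * F y ≤ y ^ (n - 1) * (2 * L * y ^ 2 / y ^ r) :=
            mul_le_mul_of_nonneg_left h1 (pow_nonneg hy0.le _)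
        _ = 2 * L * (y ^ ((n:ℝ) - 1) * y ^ (2:ℝ) / y ^ r) := by
            rw [show (y:ℝ) ^ (n - 1) = y ^ ((n:ℝ) - 1) by
                rw [← rpow_natCast y (n - 1), Nat.cast_sub hn, Nat.cast_one],
              show (y:ℝ) ^ (2:ℕ) = y ^ (2:ℝ) by rw [← rpow_natCast y 2]; norm_num]
            ring
        _ = 2 * L * y ^ (1 - 2 * s) := by
            rw [← rpow_add hy0, ← rpow_sub hy0]
            congr 1
            rw [hrdef]; ring
    · -- far away: dominated by 4M * y ^ (-1 - 2s)
      have hint : IntegrableOn (fun y : ℝ => 4 * M * y ^ (-1 - 2 * s)) (Ioi (1:ℝ)) :=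
        (integrableOn_Ioi_rpow_of_lt (by linarith) one_pos).const_mul _
      apply hint.mono' hWmeas.restrict
      filter_upwards [ae_restrict_mem measurableSet_Ioi] with y hy
      have hy0 : (0:ℝ) < y := lt_trans one_pos hy
      rw [Real.norm_eq_abs,
        abs_of_nonneg (mul_nonneg (pow_nonneg hy0.le _) (hFnonneg y hy0.le))]
      have h1 : F y ≤ 4 * M / y ^ r := by
        apply div_le_div_of_nonneg_right (min_le_right _ _) (rpow_pos_of_pos hy0 r).le
      calc y ^ (n - 1) * F y ≤ y ^ (n - 1) * (4 * M / y ^ r) :=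
            mul_le_mul_of_nonneg_left h1 (pow_nonneg hy0.le _)
        _ = 4 * M * (y ^ ((n:ℝ) - 1) / y ^ r) := by
            rw [show (y:ℝ) ^ (n - 1) = y ^ ((n:ℝ) - 1) by
                rw [← rpow_natCast y (n - 1), Nat.cast_sub hn, Nat.cast_one]]
            ring
        _ = 4 * M * y ^ (-1 - 2 * s) := by
            rw [← rpow_sub hy0]
            congr 1
            rw [hrdef]; ring
  -- the dominating function is integrable
  have hGint : Integrable (fun h : EuclideanSpace ℝ (Fin n) => F ‖h‖) := by
    apply integrable_comp_norm' volume hFmeas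
    rw [finrank_euclideanSpace_fin]
    have heq : ∀ᵐ y ∂(volume.restrict (Ioi (0:ℝ))),
        ENNReal.ofReal (y ^ (n - 1)) * (‖F y‖₊ : ℝ≥0∞)
          = ENNReal.ofReal (y ^ (n - 1) * F y) := by
      filter_upwards [ae_restrict_mem measurableSet_Ioi] with y hy
      rw [← enorm_eq_nnnorm, Real.enorm_eq_ofReal (hFnonneg y (le_of_lt hy)),
        ← ENNReal.ofReal_mul (pow_nonneg (le_of_lt hy) _)]
    rw [lintegral_congr_ae heq]
    exact hW.setLIntegral_lt_top
  -- conclude by domination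
  apply hGint.mono'
  · apply Measurable.aestronglyMeasurable
    apply Measurable.div
    · exact ((continuous_const.sub
        (hu.continuous.comp (continuous_const.add continuous_id))).sub
        (hu.continuous.comp (continuous_const.sub continuous_id))).measurable
    · exact (continuous_norm.rpow_const fun _ => Or.inr hr.le).measurable
  · filter_upwards with h
    rw [Real.norm_eq_abs, abs_div, abs_of_nonneg (rpow_nonneg (norm_nonneg h) r)]
    rcases eq_or_ne ‖h‖ 0 with h0 | h0
    · simp [F, h0, Real.zero_rpow hr.ne']
    · have hpos : 0 < ‖h‖ ^ r := rpow_pos_of_pos (lt_of_le_of_ne (norm_nonneg h) (Ne.symm h0)) r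
      exact div_le_div_of_nonneg_right (le_min (key2 h) (keyM h)) hpos.le
end

section
/- Let n ≥ 1, 0 < s < 1, and let u : ℝ^n → ℝ be smooth with compact support contained in the ball B_R of radius R centered at the origin. Then for every x with |x| ≥ 2R, the fractional Laplacian-type quantity L_s u(x) = ∫_{ℝ^n} (2u(x) − u(x+h) − u(x−h))/|h|^{n+2s} dh satisfies |L_s u(x)| ≤ C / |x|^{n+2s}, where C = 2^{n+2s+1} · |B_R| · ‖u‖_∞ and |B_R| is the Lebesgue measure of B_R. -/
open Real Set MeasureTheory

theorem stmt_4 (n : ℕ) (hn : 1 ≤ n) (s : ℝ) (hs : 0 < s) (hs1 : s < 1) (R : ℝ) (hR : 0 < R)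
    (u : EuclideanSpace ℝ (Fin n) → ℝ) (hu : ContDiff ℝ (⊤ : ℕ∞) u) (hcs : HasCompactSupport u)
    (hsupp : Function.support u ⊆ Metric.ball (0 : EuclideanSpace ℝ (Fin n)) R)
    (x : EuclideanSpace ℝ (Fin n)) (hx : 2 * R ≤ ‖x‖) :
    |∫ h : EuclideanSpace ℝ (Fin n),
        (2 * u x - u (x + h) - u (x - h)) / ‖h‖ ^ ((n : ℝ) + 2 * s)| ≤
      (2 ^ ((n : ℝ) + 2 * s + 1) *
          (volume (Metric.ball (0 : EuclideanSpace ℝ (Fin n)) R)).toReal *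
          (⨆ y, |u y|)) / ‖x‖ ^ ((n : ℝ) + 2 * s) := by
  set p : ℝ := (n : ℝ) + 2 * s with hp
  have hn' : (1 : ℝ) ≤ (n : ℝ) := by exact_mod_cast hn
  have hp0 : 0 < p := by positivity
  have hxpos : (0 : ℝ) < ‖x‖ := lt_of_lt_of_le (by linarith) hx
  have hxR : R ≤ ‖x‖ / 2 := by linarith
  have hbdd : BddAbove (Set.range fun y => |u y|) := by
    simpa [Real.norm_eq_abs] using
      hu.continuous.norm.bddAbove_range_of_hasCompactSupport hcs.norm
  set M : ℝ := ⨆ y, |u y| with hM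
  have hMle : ∀ z, |u z| ≤ M := fun z => le_ciSup hbdd z
  have hM0 : 0 ≤ M := (abs_nonneg _).trans (hMle x)
  have hux : u x = 0 := by
    by_contra h
    have := hsupp (Function.mem_support.2 h)
    rw [Metric.mem_ball, dist_zero_right] at this
    linarith
  set c : ℝ := M / (‖x‖ / 2) ^ p with hc
  have hhalf : (0 : ℝ) < ‖x‖ / 2 := by linarith
  have hhalfp : (0 : ℝ) < (‖x‖ / 2) ^ p := Real.rpow_pos_of_pos hhalf p
  have hc0 : 0 ≤ c := div_nonneg hM0 hhalfp.le
  -- pointwise bound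
  have hbound : ∀ h : EuclideanSpace ℝ (Fin n),
      |(2 * u x - u (x + h) - u (x - h)) / ‖h‖ ^ p| ≤
        c * ((Metric.ball (-x) R).indicator (fun _ => (1 : ℝ)) h +
            (Metric.ball x R).indicator (fun _ => (1 : ℝ)) h) := by
    intro h
    have key : ∀ z : EuclideanSpace ℝ (Fin n), ‖x - z‖ ≤ ‖h‖ →
        |u z| / ‖h‖ ^ p ≤
          c * (Metric.ball (0 : EuclideanSpace ℝ (Fin n)) R).indicator (fun _ => (1:ℝ)) z := by
      intro z hz
      rcases eq_or_ne (u z) 0 with h0 | h0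
      · simp only [h0, abs_zero, zero_div]
        have : (0:ℝ) ≤
            (Metric.ball (0 : EuclideanSpace ℝ (Fin n)) R).indicator (fun _ => (1:ℝ)) z :=
          Set.indicator_nonneg (fun _ _ => zero_le_one) z
        positivity
      · have hzR : ‖z‖ < R := by
          have := hsupp (Function.mem_support.2 h0)
          rwa [Metric.mem_ball, dist_zero_right] at this
        have hmem : z ∈ Metric.ball (0 : EuclideanSpace ℝ (Fin n)) R := by
          rwa [Metric.mem_ball, dist_zero_right]
        rw [Set.indicator_of_mem hmem]
        have hh : ‖x‖ / 2 ≤ ‖h‖ := by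
          have : ‖x‖ - ‖z‖ ≤ ‖x - z‖ := by
            simpa using norm_sub_norm_le x z
          linarith
        have hpow : (‖x‖ / 2) ^ p ≤ ‖h‖ ^ p :=
          Real.rpow_le_rpow hhalf.le hh hp0.le
        calc |u z| / ‖h‖ ^ p ≤ M / (‖x‖ / 2) ^ p :=
              div_le_div₀ hM0 (hMle z) hhalfp hpow
          _ = c * 1 := by rw [mul_one]
    have h1 : |u (x + h)| / ‖h‖ ^ p ≤
        c * (Metric.ball (-x) R).indicator (fun _ => (1:ℝ)) h := by
      have hkey := key (x + h) (by simp)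
      have hiff : x + h ∈ Metric.ball (0 : EuclideanSpace ℝ (Fin n)) R ↔
          h ∈ Metric.ball (-x) R := by
        rw [Metric.mem_ball, Metric.mem_ball, dist_zero_right, dist_eq_norm,
          sub_neg_eq_add, add_comm]
      have heq : (Metric.ball (0 : EuclideanSpace ℝ (Fin n)) R).indicator
            (fun _ => (1:ℝ)) (x + h) =
          (Metric.ball (-x) R).indicator (fun _ => (1:ℝ)) h := by
        by_cases hmem : x + h ∈ Metric.ball (0 : EuclideanSpace ℝ (Fin n)) R
        · rw [Set.indicator_of_mem hmem, Set.indicator_of_mem (hiff.1 hmem)]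
        · rw [Set.indicator_of_notMem hmem,
            Set.indicator_of_notMem (fun hc' => hmem (hiff.2 hc'))]
      rwa [heq] at hkey
    have h2 : |u (x - h)| / ‖h‖ ^ p ≤
        c * (Metric.ball x R).indicator (fun _ => (1:ℝ)) h := by
      have hkey := key (x - h) (by simp)
      have hiff : x - h ∈ Metric.ball (0 : EuclideanSpace ℝ (Fin n)) R ↔
          h ∈ Metric.ball x R := by
        rw [Metric.mem_ball, Metric.mem_ball, dist_zero_right, dist_eq_norm,
          ← norm_neg (x - h), neg_sub]
      have heq : (Metric.ball (0 : EuclideanSpace ℝ (Fin n)) R).indicator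
            (fun _ => (1:ℝ)) (x - h) =
          (Metric.ball x R).indicator (fun _ => (1:ℝ)) h := by
        by_cases hmem : x - h ∈ Metric.ball (0 : EuclideanSpace ℝ (Fin n)) R
        · rw [Set.indicator_of_mem hmem, Set.indicator_of_mem (hiff.1 hmem)]
        · rw [Set.indicator_of_notMem hmem,
            Set.indicator_of_notMem (fun hc' => hmem (hiff.2 hc'))]
      rwa [heq] at hkey
    have hnum : 2 * u x - u (x + h) - u (x - h) = -(u (x + h) + u (x - h)) := by
      rw [hux]; ring
    have habs : |u (x + h) + u (x - h)| ≤ |u (x + h)| + |u (x - h)| := abs_add_le _ _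
    calc |(2 * u x - u (x + h) - u (x - h)) / ‖h‖ ^ p|
        = |u (x + h) + u (x - h)| / ‖h‖ ^ p := by
          rw [hnum, abs_div, abs_neg, abs_of_nonneg (Real.rpow_nonneg (norm_nonneg _) p)]
      _ ≤ (|u (x + h)| + |u (x - h)|) / ‖h‖ ^ p := by
          rw [div_eq_mul_inv, div_eq_mul_inv]
          exact mul_le_mul_of_nonneg_right habs (by positivity)
      _ = |u (x + h)| / ‖h‖ ^ p + |u (x - h)| / ‖h‖ ^ p := add_div _ _ _
      _ ≤ c * ((Metric.ball (-x) R).indicator (fun _ => (1 : ℝ)) h +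
            (Metric.ball x R).indicator (fun _ => (1 : ℝ)) h) := by
          rw [mul_add]; exact add_le_add h1 h2
  -- integrability
  have hi1 : Integrable ((Metric.ball (-x) R).indicator (fun _ => (1:ℝ))) := by
    rw [integrable_indicator_iff measurableSet_ball]
    exact integrableOn_const measure_ball_lt_top.ne
  have hi2 : Integrable ((Metric.ball x R).indicator (fun _ => (1:ℝ))) := by
    rw [integrable_indicator_iff measurableSet_ball]
    exact integrableOn_const measure_ball_lt_top.ne
  have hg_int : Integrable (fun h : EuclideanSpace ℝ (Fin n) =>
      c * ((Metric.ball (-x) R).indicator (fun _ => (1 : ℝ)) h +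
          (Metric.ball x R).indicator (fun _ => (1 : ℝ)) h)) :=
    (hi1.add hi2).const_mul c
  have step1 : |∫ h : EuclideanSpace ℝ (Fin n),
      (2 * u x - u (x + h) - u (x - h)) / ‖h‖ ^ p| ≤
      ∫ h : EuclideanSpace ℝ (Fin n),
        c * ((Metric.ball (-x) R).indicator (fun _ => (1 : ℝ)) h +
            (Metric.ball x R).indicator (fun _ => (1 : ℝ)) h) := by
    calc |∫ h : EuclideanSpace ℝ (Fin n), (2 * u x - u (x + h) - u (x - h)) / ‖h‖ ^ p|
        = ‖∫ h : EuclideanSpace ℝ (Fin n), (2 * u x - u (x + h) - u (x - h)) / ‖h‖ ^ p‖ :=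
          (Real.norm_eq_abs _).symm
      _ ≤ ∫ h : EuclideanSpace ℝ (Fin n), ‖(2 * u x - u (x + h) - u (x - h)) / ‖h‖ ^ p‖ :=
          norm_integral_le_integral_norm _
      _ = ∫ h : EuclideanSpace ℝ (Fin n), |(2 * u x - u (x + h) - u (x - h)) / ‖h‖ ^ p| := by
          simp only [Real.norm_eq_abs]
      _ ≤ _ :=
          integral_mono_of_nonneg (ae_of_all _ fun h => abs_nonneg _) hg_int
            (ae_of_all _ hbound)
  set V : ℝ := (volume (Metric.ball (0 : EuclideanSpace ℝ (Fin n)) R)).toReal with hV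
  have hgval : (∫ h : EuclideanSpace ℝ (Fin n),
      c * ((Metric.ball (-x) R).indicator (fun _ => (1 : ℝ)) h +
          (Metric.ball x R).indicator (fun _ => (1 : ℝ)) h)) = c * (V + V) := by
    rw [integral_const_mul, integral_add hi1 hi2]
    have e1 : (∫ h : EuclideanSpace ℝ (Fin n),
        (Metric.ball (-x) R).indicator (fun _ => (1:ℝ)) h) = V := by
      rw [integral_indicator_const _ measurableSet_ball, smul_eq_mul, mul_one, measureReal_def, hV,
        Measure.addHaar_ball_center]
    have e2 : (∫ h : EuclideanSpace ℝ (Fin n),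
        (Metric.ball x R).indicator (fun _ => (1:ℝ)) h) = V := by
      rw [integral_indicator_const _ measurableSet_ball, smul_eq_mul, mul_one, measureReal_def, hV,
        Measure.addHaar_ball_center]
    rw [e1, e2]
  have hV0 : 0 ≤ V := ENNReal.toReal_nonneg
  have h2p : (0:ℝ) < (2:ℝ) ^ p := Real.rpow_pos_of_pos (by norm_num) p
  have hxp : (0:ℝ) < ‖x‖ ^ p := Real.rpow_pos_of_pos hxpos p
  have hfinal : c * (V + V) = (2 ^ (p + 1) * V * M) / ‖x‖ ^ p := by
    have e2p : (2:ℝ) ^ (p + 1) = 2 ^ p * 2 := by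
      rw [Real.rpow_add (by norm_num : (0:ℝ) < 2) p 1, Real.rpow_one]
    have ehx : (‖x‖ / 2) ^ p = ‖x‖ ^ p / 2 ^ p :=
      Real.div_rpow (norm_nonneg x) (by norm_num : (0:ℝ) ≤ 2) p
    rw [hc, e2p, ehx]
    field_simp
    ring
  rw [hgval, hfinal] at step1
  exact step1
end
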